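/- Let C be an essentially small additive category and m an object of C. The forgetful functor U : m\C → C induces an isomorphism of Grothendieck groups K(U) : K(m\C) → K(C), whose inverse is K(S) where S : C → m\C is the section a ↦ (a, 0). -/

import Mathlib

open CategoryTheory CategoryTheory.Limits

universe v u

variable (C : Type u) [Category.{v} C]

/-- The subgroup of relations `[p a b] - [a] - [b]` defining the Grothendieck group of a
category with a chosen binary product operation `p`. -/
def kRel (p : C → C → C) :
    AddSubgroup (FreeAbelianGroup (Quotient (CategoryTheory.isIsomorphicSetoid C))) :=
  AddSubgroup.closure
    {x | ∃ a b : C,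
      x = FreeAbelianGroup.of (Quotient.mk (CategoryTheory.isIsomorphicSetoid C) (p a b)) -
        FreeAbelianGroup.of (Quotient.mk (CategoryTheory.isIsomorphicSetoid C) a) -
        FreeAbelianGroup.of (Quotient.mk (CategoryTheory.isIsomorphicSetoid C) b)}

/-- The Grothendieck group `K(C)` of the monoid of isomorphism classes of objects of `C`,
with addition induced by the binary product operation `p`. -/
abbrev KGrp (p : C → C → C) :=
  FreeAbelianGroup (Quotient (CategoryTheory.isIsomorphicSetoid C)) ⧸ kRel C p

/-- The class `[a] ∈ K(C)` of an object `a`. -/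
def kCls (p : C → C → C) (a : C) : KGrp C p :=
  QuotientAddGroup.mk (FreeAbelianGroup.of (Quotient.mk (CategoryTheory.isIsomorphicSetoid C) a))

/-
`K(m\C)` and `K(C)` are generated by classes of objects and `U ∘ S = 𝟭`, so it suffices that
`[(a, 0)] = [(a, f)]` in `K(m\C)` for every `f : m ⟶ a`. The shear `(u, v) ↦ (u, v - u)` is an
isomorphism `(a, f) × (a, f) ≅ (a, f) × (a, 0)` in `m\C`, whence
`[(a, f)] + [(a, f)] = [(a, f)] + [(a, 0)]`; cancel `[(a, f)]`.
-/

section Grothendieck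

variable {C} (p : C → C → C)

lemma kCls_eq_of_iso {a b : C} (e : a ≅ b) : kCls C p a = kCls C p b := by
  have h : Quotient.mk (isIsomorphicSetoid C) a = Quotient.mk _ b := Quotient.sound ⟨e⟩
  rw [kCls, kCls, h]

lemma kCls_add (a b : C) : kCls C p (p a b) = kCls C p a + kCls C p b := by
  rw [← sub_eq_zero, ← sub_sub]
  simp only [kCls, ← QuotientAddGroup.mk_sub]
  exact (QuotientAddGroup.eq_zero_iff _).mpr (AddSubgroup.subset_closure ⟨a, b, rfl⟩)

def kLift {G : Type*} [AddCommGroup G] (f : C → G) (hf_iso : ∀ a b : C, (a ≅ b) → f a = f b)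
    (hf_add : ∀ a b : C, f (p a b) = f a + f b) : KGrp C p →+ G :=
  QuotientAddGroup.lift (kRel C p)
    (FreeAbelianGroup.lift (Quotient.lift f fun a b ⟨e⟩ => hf_iso a b e))
    (by
      rw [kRel, AddSubgroup.closure_le]
      rintro _ ⟨a, b, rfl⟩
      simp [hf_add, sub_sub])

lemma kLift_kCls {G : Type*} [AddCommGroup G] (f : C → G)
    (hf_iso : ∀ a b : C, (a ≅ b) → f a = f b) (hf_add : ∀ a b : C, f (p a b) = f a + f b)
    (a : C) : kLift p f hf_iso hf_add (kCls C p a) = f a := by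
  rw [kLift, kCls, QuotientAddGroup.lift_mk, FreeAbelianGroup.lift_apply_of]
  rfl

lemma kHom_ext {G : Type*} [AddCommGroup G] {φ ψ : KGrp C p →+ G}
    (h : ∀ a : C, φ (kCls C p a) = ψ (kCls C p a)) : φ = ψ := by
  refine QuotientAddGroup.addMonoidHom_ext _ (FreeAbelianGroup.lift_ext _ _ fun q => ?_)
  induction q using Quotient.ind with
  | _ a => exact h a

variable {D : Type*} [Category D] (q : D → D → D)

def kMap (F : C ⥤ D) (hF : ∀ a b : C, Nonempty (F.obj (p a b) ≅ q (F.obj a) (F.obj b))) :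
    KGrp C p →+ KGrp D q :=
  kLift p (fun a => kCls D q (F.obj a)) (fun _ _ e => kCls_eq_of_iso q (F.mapIso e))
    fun a b => (kCls_eq_of_iso q (hF a b).some).trans (kCls_add q _ _)

@[simp]
lemma kMap_kCls (F : C ⥤ D) (hF : ∀ a b : C, Nonempty (F.obj (p a b) ≅ q (F.obj a) (F.obj b)))
    (a : C) : kMap p q F hF (kCls C p a) = kCls D q (F.obj a) :=
  kLift_kCls _ _ _ _ a

end Grothendieck

section Under

variable {C} (m : C)

noncomputable abbrev underProd [HasBinaryProducts C] (x y : Under m) : Under m :=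
  Under.mk (prod.lift x.hom y.hom)

@[simps]
def underZeroSection [HasZeroMorphisms C] : C ⥤ Under m where
  obj a := Under.mk (0 : m ⟶ a)
  map f := Under.homMk f

lemma underProd_zeroSection [HasZeroMorphisms C] [HasBinaryProducts C] (a b : C) :
    underProd m ((underZeroSection m).obj a) ((underZeroSection m).obj b) =
      (underZeroSection m).obj (a ⨯ b) := by
  have h : prod.lift (0 : m ⟶ a) (0 : m ⟶ b) = 0 := by
    ext <;> simp [prod.lift_fst, prod.lift_snd]
  exact congrArg Under.mk h

variable {m}

noncomputable def underProdShearIso [Preadditive C] [HasBinaryProducts C] (x : Under m) :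
    underProd m x x ≅ underProd m x (Under.mk (0 : m ⟶ x.right)) :=
  Under.isoMk
    { hom := prod.lift prod.fst (prod.snd - prod.fst)
      inv := prod.lift prod.fst (prod.snd + prod.fst)
      hom_inv_id := by
        apply prod.hom_ext <;> simp [prod.lift_fst, prod.lift_snd, Preadditive.comp_add]
      inv_hom_id := by
        apply prod.hom_ext <;> simp [prod.lift_fst, prod.lift_snd, Preadditive.comp_sub] }
    (by apply prod.hom_ext <;> simp [prod.lift_fst, prod.lift_snd, Preadditive.comp_sub])

lemma kCls_mk_zero [Preadditive C] [HasBinaryProducts C] (x : Under m) :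
    kCls (Under m) (underProd m) (Under.mk (0 : m ⟶ x.right)) = kCls (Under m) (underProd m) x :=
  have h := kCls_eq_of_iso (underProd m) (underProdShearIso x)
  (add_left_cancel ((kCls_add _ x x).symm.trans (h.trans (kCls_add _ x _)))).symm

end Under

/-- For an additive category `C` and an object `m`, the forgetful functor `U : m\C ⥤ C`
induces an isomorphism of Grothendieck groups `K(U) : K(m\C) → K(C)` (the group homomorphism
determined by `[x] ↦ [U x]`), whose inverse is `K(S)`, induced by the section `S : a ↦ (a,0)`.
Products in `m\C` are `(a,f) × (a',f') = (a ⊕ a', (f,f'))`, products in `C` are `a ⨯ b`. -/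
theorem K_forget_iso_K_section [Preadditive C] [HasFiniteBiproducts C] (m : C) :
    ∃ (Φ : KGrp (Under m) (fun x y => Under.mk (prod.lift (x.hom : m ⟶ x.right)
            (y.hom : m ⟶ y.right))) →+ KGrp C (fun a b => a ⨯ b))
      (Ψ : KGrp C (fun a b => a ⨯ b) →+ KGrp (Under m)
        (fun x y => Under.mk (prod.lift (x.hom : m ⟶ x.right) (y.hom : m ⟶ y.right)))),
      (∀ x : Under m, Φ (kCls _ _ x) = kCls _ _ ((Under.forget m).obj x)) ∧
      (∀ a : C, Ψ (kCls _ _ a) = kCls _ _ (Under.mk (0 : m ⟶ a))) ∧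
      Ψ.comp Φ = AddMonoidHom.id _ ∧ Φ.comp Ψ = AddMonoidHom.id _ := by
  refine ⟨kMap (underProd m) _ (Under.forget m) fun _ _ => ⟨Iso.refl _⟩,
    kMap _ (underProd m) (underZeroSection m) fun a b =>
      ⟨eqToIso (underProd_zeroSection m a b).symm⟩,
    fun x => kMap_kCls _ _ _ _ x, fun a => kMap_kCls _ _ _ _ a, ?_, ?_⟩
  · exact kHom_ext _ fun x => by simpa using kCls_mk_zero x
  · exact kHom_ext _ fun a => by simp
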